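/- For k ≥ r ≥ 1 and t ≥ 0, let π be a partition in C(k,r) whose largest odd part is 2t+1. Then: (1) if there is a 2-marked part 2t+2 in GG(π), it is of starting type s₀ or s₂; (2) if there is a 2-marked part 2t+4 in GG(π), it is of starting type s₃. -/

import Mathlib

namespace Bressoud

/-- A partition: a weakly decreasing list of positive integers. -/
structure Partition where
  parts : List ℕ
  pos : ∀ x ∈ parts, 0 < x
  sorted : parts.Pairwise (· ≥ ·)

namespace Partition

/-- `|π|`, the sum of the parts of `π`. -/
def size (π : Partition) : ℕ := π.parts.sum

/-- `ℓ(π)`, the number of parts of `π`. -/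
def numParts (π : Partition) : ℕ := π.parts.length

end Partition

lemma exists_pos_not_mem (s : List ℕ) : ∃ n, 0 < n ∧ n ∉ s := by
  refine ⟨s.sum + 1, Nat.succ_pos _, fun h => ?_⟩
  have := List.single_le_sum (l := s) (fun x _ => Nat.zero_le x) _ h
  omega

/-- The least positive integer not occurring in `s`. -/
def mex1 (s : List ℕ) : ℕ := Nat.find (exists_pos_not_mem s)

/-- Parts `p ≥ q` conflict (must receive different marks) when `p - q ≤ 2`,
with strict inequality when `p` is odd. -/
def conflict (p q : ℕ) : Bool :=
  if p % 2 = 1 then decide (p - q < 2) else decide (p - q ≤ 2)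

/-- Greedy computation of the Göllnitz–Gordon marking: the parts are processed
from smallest to largest (second argument: remaining parts in increasing
order; first argument: already processed parts with their marks), and each
part receives the least positive mark different from the marks of all already
processed conflicting parts. -/
def ggAux : List (ℕ × ℕ) → List ℕ → List (ℕ × ℕ)
  | acc, [] => acc
  | acc, p :: rest =>
      ggAux ((p, mex1 ((acc.filter fun q => conflict p q.1).map Prod.snd)) :: acc) rest

/-- The Göllnitz–Gordon marking `GG(π)` of `π`, as a list of (part, mark)
pairs in decreasing order of parts. -/
def ggMarks (π : Partition) : List (ℕ × ℕ) := ggAux [] π.parts.reverse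

/-- There is an `m`-marked part equal to `x` in `GG(π)`. -/
def Marked (π : Partition) (x m : ℕ) : Prop := (x, m) ∈ ggMarks π

instance (π : Partition) (x m : ℕ) : Decidable (Marked π x m) := by
  unfold Marked; infer_instance

/-- The `i`-th row of `GG(π)`: the `i`-marked parts, in decreasing order. -/
def row (π : Partition) (i : ℕ) : List ℕ :=
  ((ggMarks π).filter fun q => q.2 == i).map Prod.fst

/-- `N_i(π)`: the number of `i`-marked parts of `π`. -/
def Nmk (π : Partition) (i : ℕ) : ℕ := (row π i).length

/-- `π^{(i)}_j` as a natural number (meaningful for `1 ≤ j ≤ N_i(π)`;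
junk value `0` otherwise). -/
def nth (π : Partition) (i j : ℕ) : ℕ := (row π i).getD (j - 1) 0

/-- The canonical embedding of the natural numbers into `EReal`. -/
noncomputable def natE (n : ℕ) : EReal := ((n : ℝ) : EReal)

/-- `π^{(i)}_j` as an extended real, with the conventions `π^{(i)}_0 = +∞`
and `π^{(i)}_j = -∞` for `j > N_i(π)`. -/
noncomputable def rowVal (π : Partition) (i j : ℕ) : EReal :=
  if j = 0 then ⊤
  else
    match (row π i)[j - 1]? with
    | some x => natE x
    | none => ⊥

/-- The largest `l ≥ 0` such that there is no odd part of `π` greater than or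
equal to `π^{(2)}_l` (the indices `1 ≤ j ≤ N₂(π)` with this property form an
initial segment, so this is also their number). -/
def bigL (π : Partition) : ℕ :=
  ((List.range' 1 (Nmk π 2)).filter fun j =>
    decide (∀ x ∈ π.parts, x % 2 = 1 → x < nth π 2 j)).length

/-- `startPair π b = (starting type of π^{(2)}_b, s_b(π))` for `1 ≤ b ≤ N₂(π)`.
Starting types are encoded by integers: `-1` stands for `s₋₁`, and `0,1,2,3`
for `s₀,s₁,s₂,s₃`; the value `9` is a junk value used when no case applies. -/
def startPair (π : Partition) : ℕ → ℤ × ℕ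
  | 0 => (9, 0)
  | b + 1 =>
    let v := nth π 2 (b + 1)
    if bigL π < b + 1 then (-1, 0)
    else
      let okLow : Bool :=
        if b = 0 then !decide ((v + 2) ∈ π.parts)
        else !decide (Marked π (v + 2) 1) || decide ((startPair π b).2 = v + 2)
      let ok2 : Bool :=
        if b = 0 then decide (Marked π (v + 2) 1)
        else decide (Marked π (v + 2) 1) && !decide ((startPair π b).2 = v + 2)
      if decide (Marked π (v - 1) 1) && okLow then (0, v - 1)
      else if decide (Marked π (v - 2) 1) && okLow then (1, v - 2)
      else if ok2 then (2, v + 2)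
      else if decide (Marked π v 1) then (3, v)
      else (9, 0)

/-- The starting type of `π^{(2)}_b`, encoded as an integer. -/
def startType (π : Partition) (b : ℕ) : ℤ := (startPair π b).1

/-- The set `C(k,r)`: partitions with no repeated odd part, in which the parts
equal to `1` and `2` have marks at most `r - 1`, and whose Göllnitz–Gordon
marking has at most `k - 1` rows. -/
def C (k r : ℕ) : Set Partition :=
  { π | (∀ x, x % 2 = 1 → π.parts.count x ≤ 1) ∧
        (∀ x m, Marked π x m → x ≤ 2 → m ≤ r - 1) ∧
        (∀ x m, Marked π x m → m ≤ k - 1) }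

/-- The set `C_<(k,r|p,t)`. -/
noncomputable def Clt (k r p t : ℕ) : Set Partition :=
  { π | π ∈ C k r ∧
        (∀ x ∈ π.parts, x % 2 = 1 → x < 2 * t + 1) ∧
        rowVal π 2 (p + 1) < natE (2 * t + 1) ∧
        natE (2 * t + 1) < rowVal π 2 p ∧
        (rowVal π 2 p = natE (2 * t + 2) →
          startType π p = 2 ∨ startType π p = 3) ∧
        (rowVal π 2 (p + 1) = natE (2 * t) →
          startType π (p + 1) = 0 ∨ startType π (p + 1) = 1) }

/-- The set `C_=(k,r|p,t)`. -/
noncomputable def Ceq (k r p t : ℕ) : Set Partition :=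
  { π | π ∈ C k r ∧
        (2 * t + 1) ∈ π.parts ∧
        (∀ x ∈ π.parts, x % 2 = 1 → x ≤ 2 * t + 1) ∧
        (∀ m, Marked π (2 * t + 1) m → m ≤ 2) ∧
        natE (2 * t + 2) ≤ rowVal π 2 p ∧
        rowVal π 2 (p + 1) ≤ natE (2 * t + 2) ∧
        ((∃ j, 1 ≤ j ∧ j ≤ Nmk π 2 ∧ nth π 2 j = 2 * t + 2 ∧ startType π j = 0) →
          rowVal π 2 (p + 1) = natE (2 * t + 2) ∧
          ∃ i, 1 ≤ i ∧ i ≤ p + 1 ∧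
            nth π 2 i = 2 * t + 2 + 4 * (p + 1 - i) ∧
            π.parts.count (2 * t + 2 + 4 * (p + 1 - i)) = 1) ∧
        ((∃ j, 1 ≤ j ∧ j ≤ Nmk π 2 ∧ nth π 2 j = 2 * t + 2 ∧ startType π j = 2) →
          rowVal π 2 p = natE (2 * t + 2)) ∧
        ((2 * t + 2) ∈ π.parts → ¬ Marked π (2 * t + 2) 2 →
          rowVal π 2 p = natE (2 * t + 4) ∧ startType π p = 3 ∧
          ∃ i, 1 ≤ i ∧ i ≤ p ∧
            nth π 2 i = 2 * t + 4 + 4 * (p - i) ∧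
            (2 * t + 4 + 4 * (p - i) + 2) ∉ π.parts) }

/-- The first starting cluster index `p₁` of `π` (with `p₀ = p + 1`): the least
`j ≥ 1` such that `π^{(2)}_j = π^{(2)}_p + 4(p - j)` and all of
`π^{(2)}_j, …, π^{(2)}_p` have the same starting type as `π^{(2)}_p`. -/
def firstCluster (π : Partition) (p : ℕ) : ℕ :=
  ((List.range' 1 p).filter fun j =>
    (List.range' j (p + 1 - j)).all fun i =>
      decide (nth π 2 i = nth π 2 p + 4 * (p - i)) &&
      decide (startType π i = startType π p)).headD p

/-- The set `ℰ(k,r)` of partitions in `C(k,r)` with no odd parts. -/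
def E (k r : ℕ) : Set Partition :=
  { π | π ∈ C k r ∧ ∀ x ∈ π.parts, x % 2 = 0 }

/-- `C_<(k,r|m) = ⋃_{p+t=m} C_<(k,r|p,t)`. -/
noncomputable def Cltm (k r m : ℕ) : Set Partition :=
  { π | ∃ p t, p + t = m ∧ π ∈ Clt k r p t }

/-- `C_=(k,r|m) = ⋃_{p+t=m} C_=(k,r|p,t)`. -/
noncomputable def Ceqm (k r m : ℕ) : Set Partition :=
  { π | ∃ p t, p + t = m ∧ π ∈ Ceq k r p t }

/-- `I_N`: partitions into distinct odd parts, each at least `2N + 1`. -/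
def Iset (N : ℕ) : Set Partition :=
  { ζ | (∀ x ∈ ζ.parts, x % 2 = 1 ∧ 2 * N + 1 ≤ x) ∧ ζ.parts.Nodup }

/-- `F(3,3)`: pairs `(π, ζ)` with `π ∈ ℰ(3,3)` and `ζ ∈ I_{N₂(π)}`. -/
noncomputable def F33 : Set (Partition × Partition) :=
  { pq | pq.1 ∈ E 3 3 ∧ pq.2 ∈ Iset (Nmk pq.1 2) }
/-! Since `2t+1` is the largest odd part and is not repeated, the only part below it that
conflicts with it is `2t`, and `2t` also conflicts with `2t+2`; hence `2t+1` always gets a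
smaller mark than `2t+2`. So no `2t+2` is 1-marked, and a 2-marked `2t+2` sits above a
1-marked `2t+1`, which makes it of type `s₀` or `s₂`. Below `2t+4` the only candidates for a
conflicting 1-marked part are `2t+2` and `2t+3`, neither of which exists, so the lowest `2t+4`
is 1-marked; for a 2-marked `2t+4` this leaves only the type `s₃`. -/

lemma mex1_pos (s : List ℕ) : 0 < mex1 s := (Nat.find_spec (exists_pos_not_mem s)).1

lemma mex1_not_mem (s : List ℕ) : mex1 s ∉ s := (Nat.find_spec (exists_pos_not_mem s)).2

lemma mem_of_pos_of_lt_mex1 {s : List ℕ} {n : ℕ} (h0 : 0 < n) (h : n < mex1 s) : n ∈ s := by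
  by_contra hn
  exact Nat.find_min (exists_pos_not_mem s) h ⟨h0, hn⟩

lemma conflict_iff_of_even {p q : ℕ} (hp : p % 2 = 0) : conflict p q = true ↔ p - q ≤ 2 := by
  simp [conflict, show p % 2 ≠ 1 by omega]

lemma conflict_iff_of_odd {p q : ℕ} (hp : p % 2 = 1) : conflict p q = true ↔ p - q < 2 := by
  simp [conflict, hp]

/-- Each entry of a list, read from the end, carries the least positive mark that differs from
the marks of the later entries conflicting with it. -/
def IsGreedyMarking : List (ℕ × ℕ) → Prop
  | [] => True
  | e :: tl =>
    e.2 = mex1 ((tl.filter fun q => conflict e.1 q.1).map Prod.snd) ∧ IsGreedyMarking tl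

lemma IsGreedyMarking.of_append {l₁ l₂ : List (ℕ × ℕ)}
    (h : IsGreedyMarking (l₁ ++ l₂)) : IsGreedyMarking l₂ := by
  induction l₁ with
  | nil => exact h
  | cons _ _ ih => exact ih h.2

lemma isGreedyMarking_ggAux (l : List ℕ) :
    ∀ acc, IsGreedyMarking acc → IsGreedyMarking (ggAux acc l) := by
  induction l with
  | nil => exact fun _ h => h
  | cons _ _ ih => exact fun _ h => ih _ ⟨rfl, h⟩

lemma map_fst_ggAux (l : List ℕ) :
    ∀ acc, (ggAux acc l).map Prod.fst = l.reverse ++ acc.map Prod.fst := by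
  induction l with
  | nil => simp [ggAux]
  | cons _ _ ih => simp [ggAux, ih]

lemma map_fst_ggMarks (π : Partition) : (ggMarks π).map Prod.fst = π.parts := by
  simp [ggMarks, map_fst_ggAux]

lemma pairwise_ggMarks (π : Partition) : (ggMarks π).Pairwise (fun a b => b.1 ≤ a.1) := by
  simpa [← map_fst_ggMarks π, List.pairwise_map] using π.sorted

lemma Marked.mem_parts {π : Partition} {x m : ℕ} (h : Marked π x m) : x ∈ π.parts :=
  map_fst_ggMarks π ▸ List.mem_map_of_mem (f := Prod.fst) h

lemma exists_marked_of_mem_parts {π : Partition} {x : ℕ} (h : x ∈ π.parts) :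
    ∃ m, Marked π x m := by
  rw [← map_fst_ggMarks π] at h
  obtain ⟨⟨y, m⟩, hm, rfl⟩ := List.mem_map.1 h
  exact ⟨m, hm⟩

lemma mark_eq_mex1_of_eq_append {π : Partition} {l₁ l₂ : List (ℕ × ℕ)} {x m : ℕ}
    (hL : ggMarks π = l₁ ++ (x, m) :: l₂) :
    m = mex1 ((l₂.filter fun q => conflict x q.1).map Prod.snd) := by
  have h := isGreedyMarking_ggAux π.parts.reverse [] trivial
  rw [← ggMarks, hL] at h
  exact h.of_append.1

lemma Marked.pos {π : Partition} {x m : ℕ} (h : Marked π x m) : 1 ≤ m := by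
  obtain ⟨l₁, l₂, hL⟩ := List.append_of_mem h
  exact mark_eq_mex1_of_eq_append hL ▸ mex1_pos _

lemma eq_append_of_marked_of_lt {π : Partition} {x m q n : ℕ} (hx : Marked π x m)
    (hq : Marked π q n) (hlt : q < x) :
    ∃ l₁ l₂, ggMarks π = l₁ ++ (x, m) :: l₂ ∧ (q, n) ∈ l₂ := by
  obtain ⟨l₁, l₂, hL⟩ := List.append_of_mem hx
  refine ⟨l₁, l₂, hL, ?_⟩
  have hs := pairwise_ggMarks π
  rw [hL] at hs
  rw [Marked, hL] at hq
  rcases List.mem_append.1 hq with hq | hq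
  · have := (List.pairwise_append.1 hs).2.2 _ hq _ List.mem_cons_self
    simp only at this
    omega
  · rcases List.mem_cons.1 hq with hq | hq
    · cases hq; omega
    · exact hq

lemma Marked.ne_of_conflict {π : Partition} {x m q n : ℕ} (hx : Marked π x m)
    (hq : Marked π q n) (hlt : q < x) (hc : conflict x q = true) : n ≠ m := by
  obtain ⟨l₁, l₂, hL, hmem⟩ := eq_append_of_marked_of_lt hx hq hlt
  rintro rfl
  apply mex1_not_mem ((l₂.filter fun e => conflict x e.1).map Prod.snd)
  rw [← mark_eq_mex1_of_eq_append hL]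
  exact List.mem_map_of_mem (f := Prod.snd) (List.mem_filter.2 ⟨hmem, hc⟩)

lemma exists_conflict_of_lt_mark {π : Partition} {l₁ l₂ : List (ℕ × ℕ)} {x m n : ℕ}
    (hL : ggMarks π = l₁ ++ (x, m) :: l₂) (hn : 1 ≤ n) (hnm : n < m) :
    ∃ q, (q, n) ∈ l₂ ∧ conflict x q = true ∧ q ≤ x ∧ Marked π q n := by
  have hmex := mark_eq_mex1_of_eq_append hL
  obtain ⟨⟨q, n'⟩, hqf, rfl⟩ := List.mem_map.1 (mem_of_pos_of_lt_mex1 hn (hmex ▸ hnm))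
  obtain ⟨hql, hqc⟩ := List.mem_filter.1 hqf
  have hs := pairwise_ggMarks π
  rw [hL] at hs
  refine ⟨q, hql, hqc, (List.pairwise_cons.1 (List.pairwise_append.1 hs).2.1).1 _ hql, ?_⟩
  rw [Marked, hL]
  exact List.mem_append_right _ (List.mem_cons_of_mem _ hql)

lemma eq_append_lowest_of_mem_parts (π : Partition) {x : ℕ} (h : x ∈ π.parts) :
    ∃ m l₁ l₂, ggMarks π = l₁ ++ (x, m) :: l₂ ∧ x ∉ l₂.map Prod.fst := by
  rw [← map_fst_ggMarks π] at h
  generalize ggMarks π = L at h ⊢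
  induction L with
  | nil => simp at h
  | cons e tl ih =>
    by_cases hx : x ∈ tl.map Prod.fst
    · obtain ⟨m, l₁, l₂, hL, hnm⟩ := ih hx
      exact ⟨m, e :: l₁, l₂, by rw [hL]; rfl, hnm⟩
    · obtain rfl | h := List.mem_cons.1 h
      · exact ⟨e.2, [], tl, rfl, hx⟩
      · exact absurd h hx

lemma marked_one_of_mem_parts {π : Partition} {y : ℕ} (hy : y ∈ π.parts)
    (h : ∀ q < y, conflict y q = true → ¬ Marked π q 1) : Marked π y 1 := by
  obtain ⟨m, l₁, l₂, hL, hlowest⟩ := eq_append_lowest_of_mem_parts π hy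
  have hym : Marked π y m := by
    rw [Marked, hL]
    exact List.mem_append_right _ List.mem_cons_self
  obtain rfl | hm := eq_or_lt_of_le hym.pos
  · exact hym
  obtain ⟨q, hql, hqc, hqy, hq⟩ := exists_conflict_of_lt_mark hL le_rfl hm
  have hqy' : q ≠ y := by
    rintro rfl
    exact hlowest (List.mem_map_of_mem (f := Prod.fst) hql)
  exact absurd hq (h q (by omega) hqc)

lemma mark_lt_of_odd_of_marked_succ {π : Partition} {x m n : ℕ} (hodd : x % 2 = 1)
    (hcount : π.parts.count x ≤ 1) (hx : Marked π x m) (hx' : Marked π (x + 1) n) : m < n := by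
  have hne : m ≠ n :=
    hx'.ne_of_conflict hx (by omega) ((conflict_iff_of_even (by omega)).2 (by omega))
  refine lt_of_le_of_ne (not_lt.1 fun hnm => ?_) hne
  obtain ⟨l₁, l₂, hL⟩ := List.append_of_mem hx
  obtain ⟨q, hql, hqc, hqx, hq⟩ := exists_conflict_of_lt_mark hL hx'.pos hnm
  have hqx' : q ≠ x := by
    rintro rfl
    have hcount' : 2 ≤ π.parts.count q := by
      rw [← map_fst_ggMarks π, hL]
      simp only [List.map_append, List.map_cons, List.count_append, List.count_cons_self]
      have := List.count_pos_iff.2 (List.mem_map_of_mem (f := Prod.fst) hql)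
      simp only at this
      omega
    omega
  have hq1 : x - q < 2 := (conflict_iff_of_odd hodd).1 hqc
  exact hx'.ne_of_conflict hq (by omega) ((conflict_iff_of_even (by omega)).2 (by omega)) rfl

section LargestOdd

variable {π : Partition} {t : ℕ} (hmem : 2 * t + 1 ∈ π.parts)
  (hcount : π.parts.count (2 * t + 1) ≤ 1)
include hmem hcount

lemma not_marked_two_mul_add_two_one : ¬ Marked π (2 * t + 2) 1 := fun h => by
  obtain ⟨m, hm⟩ := exists_marked_of_mem_parts hmem
  have := mark_lt_of_odd_of_marked_succ (by omega) hcount hm h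
  have := hm.pos
  omega

lemma marked_two_mul_add_one_one (h : Marked π (2 * t + 2) 2) : Marked π (2 * t + 1) 1 := by
  obtain ⟨m, hm⟩ := exists_marked_of_mem_parts hmem
  obtain rfl : m = 1 := by
    have := mark_lt_of_odd_of_marked_succ (by omega) hcount hm h
    have := hm.pos
    omega
  exact hm

lemma marked_two_mul_add_four_one (hmax : ∀ x ∈ π.parts, x % 2 = 1 → x ≤ 2 * t + 1)
    (h : 2 * t + 4 ∈ π.parts) : Marked π (2 * t + 4) 1 := by
  refine marked_one_of_mem_parts h fun q hq hc hq1 => ?_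
  have : 2 * t + 2 ≤ q := by have := (conflict_iff_of_even (by omega)).1 hc; omega
  obtain rfl | rfl : q = 2 * t + 2 ∨ q = 2 * t + 3 := by omega
  · exact not_marked_two_mul_add_two_one hmem hcount hq1
  · have := hmax _ hq1.mem_parts (by omega)
    omega

end LargestOdd

lemma marked_nth {π : Partition} {i j : ℕ} (h1 : 1 ≤ j) (h2 : j ≤ Nmk π i) :
    Marked π (nth π i j) i := by
  have hlt : j - 1 < (row π i).length := by unfold Nmk at h2; omega
  have hm : nth π i j ∈ row π i := by
    rw [nth, List.getD_eq_getElem _ _ hlt]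
    exact List.getElem_mem hlt
  obtain ⟨⟨x, i'⟩, hf, rfl⟩ := List.mem_map.1 hm
  obtain ⟨hx, hi⟩ := List.mem_filter.1 hf
  obtain rfl : i' = i := by simpa using hi
  exact hx

lemma nth_le_nth {π : Partition} {i j j' : ℕ} (h1 : 1 ≤ j') (h : j' ≤ j)
    (h2 : j ≤ Nmk π i) : nth π i j ≤ nth π i j' := by
  obtain rfl | hlt := eq_or_lt_of_le h
  · exact le_rfl
  have hlt2 : j - 1 < (row π i).length := by unfold Nmk at h2; omega
  have hlt1 : j' - 1 < (row π i).length := by omega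
  have hs : (row π i).Pairwise (· ≥ ·) := by
    simpa [row, List.pairwise_map] using (pairwise_ggMarks π).filter _
  rw [nth, nth, List.getD_eq_getElem _ _ hlt2, List.getD_eq_getElem _ _ hlt1]
  exact List.pairwise_iff_getElem.1 hs _ _ hlt1 hlt2 (by omega)

lemma le_bigL {π : Partition} {j : ℕ} (h2 : j ≤ Nmk π 2)
    (h : ∀ x ∈ π.parts, x % 2 = 1 → x < nth π 2 j) : j ≤ bigL π := by
  have hsplit : List.range' 1 (Nmk π 2) =
      List.range' 1 j ++ List.range' (1 + 1 * j) (Nmk π 2 - j) := by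
    rw [List.range'_append]
    congr 1
    omega
  have hprefix : (List.range' 1 j).filter
      (fun i => decide (∀ x ∈ π.parts, x % 2 = 1 → x < nth π 2 i)) = List.range' 1 j := by
    refine List.filter_eq_self.2 fun a ha => decide_eq_true fun x hx hodd => ?_
    have ha' := List.mem_range'_1.1 ha
    have := nth_le_nth (i := 2) ha'.1 (by omega) h2
    have := h x hx hodd
    omega
  rw [bigL, hsplit, List.filter_append, List.length_append, hprefix, List.length_range']
  omega

lemma startType_eq_zero_or_two {π : Partition} {j : ℕ} (hj : 1 ≤ j) (hjL : j ≤ bigL π)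
    (hpred : Marked π (nth π 2 j - 1) 1)
    (hsucc : nth π 2 j + 2 ∈ π.parts → Marked π (nth π 2 j + 2) 1) :
    startType π j = 0 ∨ startType π j = 2 := by
  obtain ⟨b, rfl⟩ := Nat.exists_eq_add_of_le' hj
  simp only [startType, startPair, if_neg (not_lt.2 hjL)]
  rcases b with _ | b
  · by_cases hv : nth π 2 1 + 2 ∈ π.parts <;> simp_all
  · by_cases hv : Marked π (nth π 2 (b + 2) + 2) 1 <;>
      by_cases hs : (startPair π (b + 1)).2 = nth π 2 (b + 2) + 2 <;> simp_all

lemma startType_eq_three {π : Partition} {j : ℕ} (hj : 1 ≤ j) (hjL : j ≤ bigL π)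
    (hpred : ¬ Marked π (nth π 2 j - 1) 1) (hpred2 : ¬ Marked π (nth π 2 j - 2) 1)
    (hsucc : ¬ Marked π (nth π 2 j + 2) 1) (hself : Marked π (nth π 2 j) 1) :
    startType π j = 3 := by
  obtain ⟨b, rfl⟩ := Nat.exists_eq_add_of_le' hj
  simp only [startType, startPair, if_neg (not_lt.2 hjL)]
  rcases b with _ | b <;> simp_all

theorem starting_type_near_largest_odd_general (k r t : ℕ)
    (π : Partition) (hπ : π ∈ C k r)
    (hmem : (2 * t + 1) ∈ π.parts)
    (hmax : ∀ x ∈ π.parts, x % 2 = 1 → x ≤ 2 * t + 1) :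
    (∀ j, 1 ≤ j → j ≤ Nmk π 2 → nth π 2 j = 2 * t + 2 →
      startType π j = 0 ∨ startType π j = 2) ∧
    (∀ j, 1 ≤ j → j ≤ Nmk π 2 → nth π 2 j = 2 * t + 4 →
      startType π j = 3) := by
  have hcount := hπ.1 (2 * t + 1) (by omega)
  have hbigL : ∀ j ≤ Nmk π 2, 2 * t + 2 ≤ nth π 2 j → j ≤ bigL π :=
    fun j hj hv => le_bigL hj fun x hx hodd => by have := hmax x hx hodd; omega
  refine ⟨fun j hj1 hj2 hv => ?_, fun j hj1 hj2 hv => ?_⟩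
  · have h2 : Marked π (2 * t + 2) 2 := hv ▸ marked_nth hj1 hj2
    refine startType_eq_zero_or_two hj1 (hbigL j hj2 hv.ge) ?_ ?_ <;> rw [hv]
    · exact marked_two_mul_add_one_one hmem hcount h2
    · exact marked_two_mul_add_four_one hmem hcount hmax
  · have h4 : Marked π (2 * t + 4) 1 :=
      marked_two_mul_add_four_one hmem hcount hmax (hv ▸ marked_nth hj1 hj2).mem_parts
    refine startType_eq_three hj1 (hbigL j hj2 (by omega)) ?_ ?_ ?_ ?_ <;> rw [hv]
    · exact fun h => absurd (hmax _ h.mem_parts (by omega)) (by omega)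
    · exact not_marked_two_mul_add_two_one hmem hcount
    · exact fun h =>
        h.ne_of_conflict h4 (by omega) ((conflict_iff_of_even (by omega)).2 (by omega)) rfl
    · exact h4

/-- Corollary 2.12: let `π ∈ C(k,r)` with largest odd part `2t+1`. Then a
2-marked `2t+2` in `GG(π)` is of starting type `s₀` or `s₂`, and a 2-marked
`2t+4` is of starting type `s₃`. -/
theorem starting_type_near_largest_odd (k r t : ℕ) (hrk : r ≤ k) (hr : 1 ≤ r)
    (π : Partition) (hπ : π ∈ C k r)
    (hmem : (2 * t + 1) ∈ π.parts)
    (hmax : ∀ x ∈ π.parts, x % 2 = 1 → x ≤ 2 * t + 1) :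
    (∀ j, 1 ≤ j → j ≤ Nmk π 2 → nth π 2 j = 2 * t + 2 →
      startType π j = 0 ∨ startType π j = 2) ∧
    (∀ j, 1 ≤ j → j ≤ Nmk π 2 → nth π 2 j = 2 * t + 4 →
      startType π j = 3) :=
  starting_type_near_largest_odd_general k r t π hπ hmem hmax

end Bressoud
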